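/- For each τ ∈ T there exists one and only one invariant probability measure π_τ for P_τ, and for every bounded measurable φ : S → ℝ and every n ≥ 1 one has sup_{τ∈T} sup_{x∈S} |P_τⁿφ(x) − ∫_S φ dπ_τ| ≤ C‖φ‖ e^{−ρn}, where ρ = log(1/(1 − δ·μ(U₀))) > 0 and C = 2/(1 − δ·μ(U₀)); in particular C and ρ do not depend on τ or on φ. -/

import Mathlib

/-!
The minorisation `k (x, ·) ≥ δ` on `U₀` gives every row of the kernel a common part of mass
`δ μ(U₀)`, so `P` contracts the oscillation `sup φ - inf φ` by `θ = 1 - δ μ(U₀)`.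
An invariant measure is obtained as the limit of `μ Pⁿ`: its density
`y ↦ ∫ Pⁿ k(·, y) dμ` converges pointwise because `Pⁿ k(·, y)` is nearly constant, and the
limit density is invariant by dominated convergence. For any invariant `π`,
`∫ φ dπ = ∫ Pⁿφ dπ` lies in the range of `Pⁿφ`, which has width at most `2‖φ‖θⁿ`; this gives
the rate (with `e^{-ρ} = θ`) and uniqueness.
-/

open MeasureTheory Filter Topology

section

variable {α : Type*} [MeasurableSpace α]

def BddMeasurable (φ : α → ℝ) : Prop := Measurable φ ∧ ∃ C, ∀ x, |φ x| ≤ C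

def OscLE (φ : α → ℝ) (c : ℝ) : Prop := ∀ x x', φ x - φ x' ≤ c

namespace BddMeasurable

variable {φ ψ : α → ℝ}

lemma integrable (hφ : BddMeasurable φ) (ν : Measure α) [IsFiniteMeasure ν] : Integrable φ ν :=
  .of_bound hφ.1.aestronglyMeasurable hφ.2.choose (ae_of_all _ hφ.2.choose_spec)

lemma const (c : ℝ) : BddMeasurable fun _ : α => c := ⟨measurable_const, |c|, fun _ => le_rfl⟩

lemma indicator_one {E : Set α} (hE : MeasurableSet E) : BddMeasurable (E.indicator 1) :=
  ⟨measurable_one.indicator hE, 1, fun x => by by_cases hx : x ∈ E <;> simp [hx]⟩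

lemma comp {β : Type*} [MeasurableSpace β] (hφ : BddMeasurable φ) {f : β → α}
    (hf : Measurable f) : BddMeasurable (φ ∘ f) :=
  ⟨hφ.1.comp hf, hφ.2.choose, fun x => hφ.2.choose_spec (f x)⟩

lemma mul (hφ : BddMeasurable φ) (hψ : BddMeasurable ψ) : BddMeasurable fun x => φ x * ψ x := by
  obtain ⟨hφm, C, hC⟩ := hφ
  obtain ⟨hψm, D, hD⟩ := hψ
  refine ⟨hφm.mul hψm, C * D, fun x => ?_⟩
  rw [abs_mul]
  exact mul_le_mul (hC x) (hD x) (abs_nonneg _) ((abs_nonneg _).trans (hC x))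

lemma sub (hφ : BddMeasurable φ) (hψ : BddMeasurable ψ) : BddMeasurable fun x => φ x - ψ x := by
  obtain ⟨hφm, C, hC⟩ := hφ
  obtain ⟨hψm, D, hD⟩ := hψ
  exact ⟨hφm.sub hψm, C + D, fun x => (abs_sub _ _).trans (add_le_add (hC x) (hD x))⟩

lemma bddBelow (hφ : BddMeasurable φ) : BddBelow (Set.range φ) := by
  obtain ⟨-, C, hC⟩ := hφ
  exact ⟨-C, by rintro _ ⟨x, rfl⟩; exact (abs_le.1 (hC x)).1⟩

lemma exists_oscLE (hφ : BddMeasurable φ) : ∃ c, OscLE φ c := by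
  obtain ⟨-, C, hC⟩ := hφ
  exact ⟨C + C, fun x x' => (le_abs_self _).trans
    ((abs_sub _ _).trans (add_le_add (hC x) (hC x')))⟩

end BddMeasurable

lemma BddMeasurable.of_continuous {X : Type*} [TopologicalSpace X] [CompactSpace X]
    [MeasurableSpace X] [OpensMeasurableSpace X] {f : X → ℝ} (hf : Continuous f) :
    BddMeasurable f :=
  let ⟨C, hC⟩ := isCompact_univ.exists_bound_of_continuousOn hf.continuousOn
  ⟨hf.measurable, C, fun x => hC x (Set.mem_univ x)⟩

lemma integral_withDensity_ofReal {α : Type*} [MeasurableSpace α] {μ : Measure α} {f : α → ℝ}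
    (hf : Measurable f) (hf0 : ∀ x, 0 ≤ f x) (g : α → ℝ) :
    ∫ x, g x ∂μ.withDensity (fun x => ENNReal.ofReal (f x)) = ∫ x, f x * g x ∂μ := by
  rw [integral_withDensity_eq_integral_toReal_smul hf.ennreal_ofReal
    (ae_of_all _ fun _ => ENNReal.ofReal_lt_top)]
  simp [ENNReal.toReal_ofReal (hf0 _)]

lemma tendsto_integral_withDensity_ofReal {α : Type*} [MeasurableSpace α] {μ : Measure α}
    [IsFiniteMeasure μ] {g : ℕ → α → ℝ} {g' : α → ℝ} (hg : ∀ n, Measurable (g n))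
    (hg0 : ∀ n x, 0 ≤ g n x) {C : ℝ} (hgC : ∀ n x, g n x ≤ C)
    (hlim : ∀ x, Tendsto (g · x) atTop (𝓝 (g' x))) {ψ : α → ℝ} (hψ : BddMeasurable ψ) :
    Tendsto (fun n => ∫ x, ψ x ∂μ.withDensity fun x => ENNReal.ofReal (g n x)) atTop
      (𝓝 (∫ x, ψ x ∂μ.withDensity fun x => ENNReal.ofReal (g' x))) := by
  have hg'm : Measurable g' := measurable_of_tendsto_metrizable hg (tendsto_pi_nhds.2 hlim)
  have hg'0 : ∀ x, 0 ≤ g' x := fun x => ge_of_tendsto' (hlim x) fun n => hg0 n x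
  simp_rw [integral_withDensity_ofReal (hg _) (hg0 _), integral_withDensity_ofReal hg'm hg'0]
  obtain ⟨hψm, D, hD⟩ := hψ
  refine tendsto_integral_of_dominated_convergence (fun _ => C * D)
    (fun n => ((hg n).mul hψm).aestronglyMeasurable) (integrable_const _)
    (fun n => ae_of_all _ fun x => ?_) (ae_of_all _ fun x => (hlim x).mul_const (ψ x))
  rw [Real.norm_eq_abs, abs_mul, abs_of_nonneg (hg0 n x)]
  exact mul_le_mul (hgC n x) (hD x) (abs_nonneg _) ((hg0 n x).trans (hgC n x))

lemma oscLE_two_mul_iSup_abs {α : Type*} {φ : α → ℝ} (hφ : ∃ M, ∀ x, |φ x| ≤ M) :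
    OscLE φ (2 * ⨆ z, |φ z|) := fun x x' => by
  obtain ⟨M, hM⟩ := hφ
  have hbdd : BddAbove (Set.range fun z => |φ z|) := ⟨M, by rintro _ ⟨z, rfl⟩; exact hM z⟩
  linarith [le_abs_self (φ x), neg_abs_le (φ x'), le_ciSup hbdd x, le_ciSup hbdd x']

end

section Markov

variable {S : Type*} [MeasurableSpace S]

structure IsMarkovDensity (μ : Measure S) (k : S × S → ℝ) : Prop where
  bddMeasurable : BddMeasurable k
  nonneg : ∀ z, 0 ≤ k z
  integral_eq_one : ∀ x, ∫ y, k (x, y) ∂μ = 1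

noncomputable def markovOp (μ : Measure S) (k : S × S → ℝ) (φ : S → ℝ) (x : S) : ℝ :=
  ∫ y, k (x, y) * φ y ∂μ

def ContractsOsc (μ : Measure S) (k : S × S → ℝ) (θ : ℝ) : Prop :=
  ∀ φ c, BddMeasurable φ → OscLE φ c → OscLE (markovOp μ k φ) (θ * c)

def IntegralInvariant (μ : Measure S) (k : S × S → ℝ) (π : Measure S) : Prop :=
  ∀ φ, BddMeasurable φ → ∫ x, markovOp μ k φ x ∂π = ∫ x, φ x ∂π

def IsInvariantMeasure (μ : Measure S) (k : S × S → ℝ) (π : Measure S) : Prop :=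
  ∀ E, MeasurableSet E → (π E).toReal = ∫ x, (∫ y in E, k (x, y) ∂μ) ∂π

noncomputable def markovStep (μ : Measure S) (k : S × S → ℝ) (ν : Measure S) : Measure S :=
  μ.withDensity fun y => ENNReal.ofReal (∫ x, k (x, y) ∂ν)

namespace IsMarkovDensity

variable {μ : Measure S} {k : S × S → ℝ} {φ ψ : S → ℝ} {U : Set S} {δ θ : ℝ}

lemma markovOp_const (hk : IsMarkovDensity μ k) (c : ℝ) (x : S) :
    markovOp μ k (fun _ => c) x = c := by
  rw [markovOp, integral_mul_const, hk.integral_eq_one, one_mul]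

lemma bddMeasurable_integral_left (hk : IsMarkovDensity μ k) (ν : Measure S)
    [IsFiniteMeasure ν] : BddMeasurable fun y => ∫ x, k (x, y) ∂ν := by
  obtain ⟨hkm, M, hM⟩ := hk.bddMeasurable
  refine ⟨hkm.stronglyMeasurable.integral_prod_left'.measurable, M * ν.real Set.univ,
    fun y => ?_⟩
  simpa using norm_integral_le_of_norm_le_const (f := fun x => k (x, y))
    (ae_of_all ν fun x => (Real.norm_eq_abs _).trans_le (hM (x, y)))

variable [IsFiniteMeasure μ]

lemma integrable_mul (hk : IsMarkovDensity μ k) (hφ : BddMeasurable φ) (x : S) :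
    Integrable (fun y => k (x, y) * φ y) μ :=
  ((hk.bddMeasurable.comp measurable_prodMk_left).mul hφ).integrable μ

lemma markovOp_le (hk : IsMarkovDensity μ k) (hφ : BddMeasurable φ) {b : ℝ}
    (hb : ∀ y, φ y ≤ b) (x : S) : markovOp μ k φ x ≤ b :=
  calc markovOp μ k φ x ≤ ∫ y, k (x, y) * b ∂μ :=
        integral_mono (hk.integrable_mul hφ x) (hk.integrable_mul (.const b) x)
          fun y => mul_le_mul_of_nonneg_left (hb y) (hk.nonneg _)
    _ = b := by rw [integral_mul_const, hk.integral_eq_one, one_mul]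

lemma le_markovOp (hk : IsMarkovDensity μ k) (hφ : BddMeasurable φ) {a : ℝ}
    (ha : ∀ y, a ≤ φ y) (x : S) : a ≤ markovOp μ k φ x :=
  calc a = ∫ y, k (x, y) * a ∂μ := by rw [integral_mul_const, hk.integral_eq_one, one_mul]
    _ ≤ markovOp μ k φ x :=
        integral_mono (hk.integrable_mul (.const a) x) (hk.integrable_mul hφ x)
          fun y => mul_le_mul_of_nonneg_left (ha y) (hk.nonneg _)

lemma markovOp_sub (hk : IsMarkovDensity μ k) (hφ : BddMeasurable φ) (hψ : BddMeasurable ψ)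
    (x : S) : markovOp μ k (fun y => φ y - ψ y) x = markovOp μ k φ x - markovOp μ k ψ x := by
  simp only [markovOp, mul_sub]
  exact integral_sub (hk.integrable_mul hφ x) (hk.integrable_mul hψ x)

lemma bddMeasurable_markovOp (hk : IsMarkovDensity μ k) (hφ : BddMeasurable φ) :
    BddMeasurable (markovOp μ k φ) := by
  obtain ⟨C, hC⟩ := hφ.2
  refine ⟨?_, C, fun x => abs_le.2 ⟨?_, ?_⟩⟩
  · exact ((hk.bddMeasurable.mul (hφ.comp measurable_snd)).1.stronglyMeasurable
      |>.integral_prod_right').measurable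
  · exact hk.le_markovOp hφ (fun y => (abs_le.1 (hC y)).1) x
  · exact hk.markovOp_le hφ (fun y => (abs_le.1 (hC y)).2) x

lemma bddMeasurable_iterate_markovOp (hk : IsMarkovDensity μ k) (hφ : BddMeasurable φ)
    (n : ℕ) : BddMeasurable ((markovOp μ k)^[n] φ) := by
  induction n with
  | zero => exact hφ
  | succ n ih =>
    rw [Function.iterate_succ_apply']
    exact hk.bddMeasurable_markovOp ih

lemma abs_markovOp_sub_le (hk : IsMarkovDensity μ k) (hφ : BddMeasurable φ) {c : ℝ}
    (h : OscLE φ c) (x : S) : |markovOp μ k φ x - φ x| ≤ c :=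
  abs_sub_le_iff.2
    ⟨sub_le_iff_le_add'.2 (hk.markovOp_le hφ (fun y => sub_le_iff_le_add'.1 (h y x)) x),
      sub_le_comm.1 (hk.le_markovOp hφ (fun y => sub_le_comm.1 (h x y)) x)⟩

lemma mul_setIntegral_le_markovOp (hk : IsMarkovDensity μ k) (hU : MeasurableSet U)
    (hlow : ∀ x, ∀ y ∈ U, δ ≤ k (x, y)) (hφ : BddMeasurable φ) (hφ0 : ∀ y, 0 ≤ φ y)
    (x : S) : δ * ∫ y in U, φ y ∂μ ≤ markovOp μ k φ x :=
  calc δ * ∫ y in U, φ y ∂μ = ∫ y in U, δ * φ y ∂μ := (integral_const_mul _ _).symm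
    _ ≤ ∫ y in U, k (x, y) * φ y ∂μ :=
        setIntegral_mono_on ((hφ.integrable μ).const_mul δ).integrableOn
          (hk.integrable_mul hφ x).integrableOn hU
          fun y hy => mul_le_mul_of_nonneg_right (hlow x y hy) (hφ0 y)
    _ ≤ markovOp μ k φ x :=
        setIntegral_le_integral (hk.integrable_mul hφ x)
          (ae_of_all _ fun y => mul_nonneg (hk.nonneg _) (hφ0 y))

lemma markovOp_sub_markovOp_le (hk : IsMarkovDensity μ k) (hU : MeasurableSet U)
    (hlow : ∀ x, ∀ y ∈ U, δ ≤ k (x, y)) (hφ : BddMeasurable φ) {a b : ℝ}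
    (ha : ∀ y, a ≤ φ y) (hb : ∀ y, φ y ≤ b) (x x' : S) :
    markovOp μ k φ x - markovOp μ k φ x' ≤ (1 - δ * μ.real U) * (b - a) := by
  have hlo := hk.mul_setIntegral_le_markovOp hU hlow (hφ.sub (.const a))
    (fun y => sub_nonneg.2 (ha y)) x'
  have hhi := hk.mul_setIntegral_le_markovOp hU hlow ((BddMeasurable.const b).sub hφ)
    (fun y => sub_nonneg.2 (hb y)) x
  rw [hk.markovOp_sub hφ (.const a), hk.markovOp_const] at hlo
  rw [hk.markovOp_sub (.const b) hφ, hk.markovOp_const] at hhi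
  have hsum : (∫ y in U, (φ y - a) ∂μ) + ∫ y in U, (b - φ y) ∂μ = μ.real U * (b - a) := by
    rw [← integral_add ((hφ.sub (.const a)).integrable μ).integrableOn
      (((BddMeasurable.const b).sub hφ).integrable μ).integrableOn]
    simp
  linear_combination hlo + hhi - δ * hsum

lemma contractsOsc (hk : IsMarkovDensity μ k) (hU : MeasurableSet U)
    (hlow : ∀ x, ∀ y ∈ U, δ ≤ k (x, y)) : ContractsOsc μ k (1 - δ * μ.real U) := by
  intro φ c hφ h x x'
  have : Nonempty S := ⟨x⟩
  have hinf : ∀ y, φ y ≤ (⨅ y', φ y') + c := fun y =>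
    sub_le_iff_le_add.1 (le_ciInf fun y' => sub_le_comm.1 (h y y'))
  simpa using hk.markovOp_sub_markovOp_le hU hlow hφ (ciInf_le hφ.bddBelow) hinf x x'

lemma iterate_markovOp_oscLE (hk : IsMarkovDensity μ k) (hθ : ContractsOsc μ k θ)
    (hφ : BddMeasurable φ) {c : ℝ} (h : OscLE φ c) (n : ℕ) :
    OscLE ((markovOp μ k)^[n] φ) (θ ^ n * c) := by
  induction n with
  | zero => simpa using h
  | succ n ih =>
    rw [Function.iterate_succ_apply', pow_succ', mul_assoc]
    exact hθ _ _ (hk.bddMeasurable_iterate_markovOp hφ n) ih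

lemma integral_markovOp (hk : IsMarkovDensity μ k) (ν : Measure S) [IsFiniteMeasure ν]
    (hψ : BddMeasurable ψ) :
    ∫ x, markovOp μ k ψ x ∂ν = ∫ y, (∫ x, k (x, y) ∂ν) * ψ y ∂μ := by
  simp_rw [markovOp, ← integral_mul_const]
  exact integral_integral_swap ((hk.bddMeasurable.mul (hψ.comp measurable_snd)).integrable _)

lemma integral_markovStep (hk : IsMarkovDensity μ k) (ν : Measure S) [IsFiniteMeasure ν]
    (hψ : BddMeasurable ψ) : ∫ y, ψ y ∂markovStep μ k ν = ∫ x, markovOp μ k ψ x ∂ν := by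
  rw [markovStep, integral_withDensity_ofReal (hk.bddMeasurable_integral_left ν).1
    (fun y => integral_nonneg fun x => hk.nonneg _), hk.integral_markovOp ν hψ]

lemma isFiniteMeasure_markovStep (hk : IsMarkovDensity μ k) (ν : Measure S)
    [IsFiniteMeasure ν] : IsFiniteMeasure (markovStep μ k ν) :=
  isFiniteMeasure_withDensity_ofReal
    ((hk.bddMeasurable_integral_left ν).integrable μ).hasFiniteIntegral

lemma isProbabilityMeasure_markovStep (hk : IsMarkovDensity μ k) (ν : Measure S)
    [IsProbabilityMeasure ν] : IsProbabilityMeasure (markovStep μ k ν) := by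
  have h := hk.integral_markovStep ν (.const 1)
  simp only [hk.markovOp_const, integral_const, smul_eq_mul, mul_one, probReal_univ] at h
  exact isProbabilityMeasure_iff_real.2 h

lemma isProbabilityMeasure_iterate_markovStep (hk : IsMarkovDensity μ k) (ν : Measure S)
    [IsProbabilityMeasure ν] (n : ℕ) : IsProbabilityMeasure ((markovStep μ k)^[n] ν) := by
  induction n with
  | zero => assumption
  | succ n ih =>
    rw [Function.iterate_succ_apply']
    exact hk.isProbabilityMeasure_markovStep _

lemma integral_iterate_markovStep (hk : IsMarkovDensity μ k) (ν : Measure S)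
    [IsProbabilityMeasure ν] (hψ : BddMeasurable ψ) (n : ℕ) :
    ∫ y, ψ y ∂(markovStep μ k)^[n] ν = ∫ x, (markovOp μ k)^[n] ψ x ∂ν := by
  induction n generalizing ψ with
  | zero => rfl
  | succ n ih =>
    have := hk.isProbabilityMeasure_iterate_markovStep ν n
    rw [Function.iterate_succ_apply', hk.integral_markovStep _ hψ,
      ih (hk.bddMeasurable_markovOp hψ), Function.iterate_succ_apply]

lemma cauchySeq_integral_iterate (hk : IsMarkovDensity μ k) (hθ : ContractsOsc μ k θ)
    (hθ1 : θ < 1) (ν : Measure S) [IsProbabilityMeasure ν] (hφ : BddMeasurable φ) :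
    CauchySeq fun n => ∫ x, (markovOp μ k)^[n] φ x ∂ν := by
  obtain ⟨c, hc⟩ := hφ.exists_oscLE
  refine cauchySeq_of_le_geometric θ c hθ1 fun n => ?_
  have hφn := hk.bddMeasurable_iterate_markovOp hφ n
  rw [Function.iterate_succ_apply', dist_comm, Real.dist_eq,
    ← integral_sub ((hk.bddMeasurable_markovOp hφn).integrable ν) (hφn.integrable ν),
    ← Real.norm_eq_abs]
  refine (norm_integral_le_of_norm_le_const (C := θ ^ n * c) (ae_of_all _ fun x => ?_)).trans_eq
    (by rw [probReal_univ, mul_one, mul_comm])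
  exact hk.abs_markovOp_sub_le hφn (hk.iterate_markovOp_oscLE hθ hφ hc n) x

lemma integralInvariant_of_tendsto (hk : IsMarkovDensity μ k) {ν : ℕ → Measure S}
    [∀ n, IsFiniteMeasure (ν n)] (hν : ∀ n, ν (n + 1) = markovStep μ k (ν n)) {π : Measure S}
    (hlim : ∀ ψ, BddMeasurable ψ →
      Tendsto (fun n => ∫ y, ψ y ∂ν n) atTop (𝓝 (∫ y, ψ y ∂π))) :
    IntegralInvariant μ k π := fun ψ hψ => by
  refine tendsto_nhds_unique (hlim _ (hk.bddMeasurable_markovOp hψ)) ?_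
  simpa only [Function.comp_def, hν, hk.integral_markovStep _ hψ] using
    (hlim ψ hψ).comp (tendsto_add_atTop_nat 1)

end IsMarkovDensity

namespace IntegralInvariant

variable {μ : Measure S} [IsFiniteMeasure μ] {k : S × S → ℝ} {φ : S → ℝ} {θ : ℝ}
  {π : Measure S}

lemma integral_iterate (hπ : IntegralInvariant μ k π) (hk : IsMarkovDensity μ k)
    (hφ : BddMeasurable φ) (n : ℕ) : ∫ x, (markovOp μ k)^[n] φ x ∂π = ∫ x, φ x ∂π := by
  induction n with
  | zero => rfl
  | succ n ih =>
    rw [Function.iterate_succ_apply', hπ _ (hk.bddMeasurable_iterate_markovOp hφ n), ih]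

lemma abs_iterate_sub_integral_le [IsProbabilityMeasure π] (hπ : IntegralInvariant μ k π)
    (hk : IsMarkovDensity μ k) (hθ : ContractsOsc μ k θ) (hφ : BddMeasurable φ) {c : ℝ}
    (h : OscLE φ c) (n : ℕ) (x : S) :
    |(markovOp μ k)^[n] φ x - ∫ y, φ y ∂π| ≤ θ ^ n * c := by
  have hosc := hk.iterate_markovOp_oscLE hθ hφ h n
  have hint := (hk.bddMeasurable_iterate_markovOp hφ n).integrable π
  rw [← hπ.integral_iterate hk hφ n, abs_sub_le_iff]
  constructor
  · rw [sub_le_comm]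
    simpa using integral_mono (integrable_const _) hint fun y => sub_le_comm.1 (hosc x y)
  · rw [sub_le_iff_le_add']
    simpa using integral_mono hint (integrable_const _) fun y => sub_le_iff_le_add'.1 (hosc y x)

lemma unique [IsProbabilityMeasure π] {π' : Measure S} [IsProbabilityMeasure π']
    (hπ : IntegralInvariant μ k π) (hπ' : IntegralInvariant μ k π') (hk : IsMarkovDensity μ k)
    (hθ : ContractsOsc μ k θ) (hθ0 : 0 ≤ θ) (hθ1 : θ < 1) : π = π' := by
  obtain ⟨x⟩ := nonempty_of_isProbabilityMeasure π
  ext E hE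
  have hE1 := BddMeasurable.indicator_one hE
  obtain ⟨c, hc⟩ := hE1.exists_oscLE
  have hclose : ∀ n : ℕ, |π.real E - π'.real E| ≤ θ ^ n * c + θ ^ n * c := fun n => by
    rw [← integral_indicator_one hE, ← integral_indicator_one hE]
    have h := hπ.abs_iterate_sub_integral_le hk hθ hE1 hc n x
    have h' := hπ'.abs_iterate_sub_integral_le hk hθ hE1 hc n x
    rw [abs_sub_comm] at h
    exact (abs_sub_le _ _ _).trans (add_le_add h h')
  have hlim : Tendsto (fun n : ℕ => θ ^ n * c + θ ^ n * c) atTop (𝓝 0) := by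
    simpa using ((tendsto_pow_atTop_nhds_zero_of_lt_one hθ0 hθ1).mul_const c).add
      ((tendsto_pow_atTop_nhds_zero_of_lt_one hθ0 hθ1).mul_const c)
  have := ge_of_tendsto' hlim hclose
  exact (measureReal_eq_measureReal_iff).1 (sub_eq_zero.1 (abs_nonpos_iff.1 this))

end IntegralInvariant

lemma markovOp_indicator_one {μ : Measure S} {k : S × S → ℝ} {E : Set S}
    (hE : MeasurableSet E) (x : S) :
    markovOp μ k (E.indicator 1) x = ∫ y in E, k (x, y) ∂μ := by
  rw [markovOp, ← integral_indicator hE]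
  congr 1 with y
  by_cases hy : y ∈ E <;> simp [hy]

variable {μ : Measure S} {k : S × S → ℝ} {π : Measure S}

lemma IntegralInvariant.isInvariantMeasure (hπ : IntegralInvariant μ k π) :
    IsInvariantMeasure μ k π := fun E hE => by
  have h := hπ _ (.indicator_one hE)
  simp_rw [markovOp_indicator_one hE, integral_indicator_one hE] at h
  exact h.symm

lemma IsInvariantMeasure.markovStep_eq [IsFiniteMeasure μ] [IsFiniteMeasure π]
    (hπ : IsInvariantMeasure μ k π) (hk : IsMarkovDensity μ k) : markovStep μ k π = π := by
  have := hk.isFiniteMeasure_markovStep π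
  ext E hE
  rw [← measureReal_eq_measureReal_iff, ← integral_indicator_one hE,
    hk.integral_markovStep π (.indicator_one hE)]
  simp_rw [markovOp_indicator_one hE]
  exact (hπ E hE).symm

lemma IsInvariantMeasure.integralInvariant [IsFiniteMeasure μ] [IsFiniteMeasure π]
    (hπ : IsInvariantMeasure μ k π) (hk : IsMarkovDensity μ k) : IntegralInvariant μ k π := fun ψ hψ => by
  rw [← hk.integral_markovStep π hψ, hπ.markovStep_eq hk]

lemma IsMarkovDensity.exists_integralInvariant [IsProbabilityMeasure μ]
    (hk : IsMarkovDensity μ k) {θ : ℝ} (hθ : ContractsOsc μ k θ) (hθ1 : θ < 1) :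
    ∃ π, IsProbabilityMeasure π ∧ IntegralInvariant μ k π := by
  let ν n := (markovStep μ k)^[n] μ
  have hν n : IsProbabilityMeasure (ν n) := hk.isProbabilityMeasure_iterate_markovStep μ n
  have hk_left y : BddMeasurable fun x => k (x, y) :=
    hk.bddMeasurable.comp measurable_prodMk_right
  have hconv y : ∃ g, Tendsto (fun n => ∫ x, k (x, y) ∂ν n) atTop (𝓝 g) := by
    simp_rw [ν, hk.integral_iterate_markovStep μ (hk_left y)]
    exact cauchySeq_tendsto_of_complete (hk.cauchySeq_integral_iterate hθ hθ1 μ (hk_left y))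
  choose g hg using hconv
  obtain ⟨M, hM⟩ := hk.bddMeasurable.2
  have hdens_le n y : ∫ x, k (x, y) ∂ν n ≤ M := by
    simpa using integral_mono ((hk_left y).integrable (ν n)) (integrable_const M)
      fun x => (le_abs_self _).trans (hM (x, y))
  let π := μ.withDensity fun y => ENNReal.ofReal (g y)
  have hlim (ψ : S → ℝ) (hψ : BddMeasurable ψ) :
      Tendsto (fun n => ∫ y, ψ y ∂markovStep μ k (ν n)) atTop (𝓝 (∫ y, ψ y ∂π)) :=
    tendsto_integral_withDensity_ofReal (fun n => (hk.bddMeasurable_integral_left (ν n)).1)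
      (fun n y => integral_nonneg fun x => hk.nonneg _)
      hdens_le hg hψ
  have hstep n := hk.isProbabilityMeasure_markovStep (ν n)
  have hπ : IsProbabilityMeasure π := by
    have h := hlim _ (.const 1)
    simp only [integral_const, smul_eq_mul, mul_one, probReal_univ] at h
    exact isProbabilityMeasure_iff_real.2 (tendsto_nhds_unique h tendsto_const_nhds)
  refine ⟨π, hπ, hk.integralInvariant_of_tendsto (ν := fun n => markovStep μ k (ν n))
    (fun n => ?_) hlim⟩
  simp only [ν, Function.iterate_succ_apply']

theorem IsMarkovDensity.exists_unique_isInvariantMeasure [IsProbabilityMeasure μ]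
    (hk : IsMarkovDensity μ k) {θ : ℝ} (hθ : ContractsOsc μ k θ) (hθ0 : 0 ≤ θ) (hθ1 : θ < 1) :
    ∃ π : Measure S, IsProbabilityMeasure π ∧ IsInvariantMeasure μ k π ∧
      (∀ π' : Measure S, IsProbabilityMeasure π' → IsInvariantMeasure μ k π' → π' = π) ∧
      ∀ φ c, BddMeasurable φ → OscLE φ c → ∀ n x,
        |(markovOp μ k)^[n] φ x - ∫ y, φ y ∂π| ≤ θ ^ n * c := by
  obtain ⟨π, hπ1, hπ⟩ := hk.exists_integralInvariant hθ hθ1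
  exact ⟨π, hπ1, hπ.isInvariantMeasure, fun π' _ hπ' =>
    (hπ'.integralInvariant hk).unique hπ hk hθ hθ0 hθ1,
    fun φ c hφ h => hπ.abs_iterate_sub_integral_le hk hθ hφ h⟩

end Markov

theorem stmt_3_general
    {S : Type*} [MetricSpace S] [CompactSpace S]
    [MeasurableSpace S] [BorelSpace S]
    (μ : Measure S) [IsProbabilityMeasure μ]
    {T : Type*}
    (p : T → S × S → ℝ)
    (hp_cont : ∀ τ, Continuous (p τ)) (hp_nonneg : ∀ τ z, 0 ≤ p τ z)
    (hp_int : ∀ τ, ∀ x : S, ∫ y, p τ (x, y) ∂μ = 1)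
    (P : T → (S → ℝ) → (S → ℝ))
    (hP : ∀ τ, ∀ (φ : S → ℝ) (x : S), P τ φ x = ∫ y, p τ (x, y) * φ y ∂μ)
    (U₀ : Set S) (hU₀ : MeasurableSet U₀)
    (δ : ℝ)
    (hδμ_pos : 0 < δ * (μ U₀).toReal) (hδμ_lt : δ * (μ U₀).toReal < 1)
    (hp_low : ∀ τ, ∀ x : S, ∀ y ∈ U₀, δ ≤ p τ (x, y)) :
    0 < Real.log (1 / (1 - δ * (μ U₀).toReal)) ∧
    ∀ τ : T, ∃ π : Measure S, IsProbabilityMeasure π ∧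
      (∀ E : Set S, MeasurableSet E →
        (π E).toReal = ∫ x, (∫ y in E, p τ (x, y) ∂μ) ∂π) ∧
      (∀ π' : Measure S, IsProbabilityMeasure π' →
        (∀ E : Set S, MeasurableSet E →
          (π' E).toReal = ∫ x, (∫ y in E, p τ (x, y) ∂μ) ∂π') → π' = π) ∧
      (∀ φ : S → ℝ, Measurable φ → (∃ M : ℝ, ∀ x, |φ x| ≤ M) →
        ∀ n : ℕ, 1 ≤ n → ∀ x : S,
          |((P τ)^[n] φ) x - ∫ y, φ y ∂π| ≤
            (2 / (1 - δ * (μ U₀).toReal)) * (⨆ z : S, |φ z|) *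
              Real.exp (-(Real.log (1 / (1 - δ * (μ U₀).toReal))) * n)) := by
  set θ := 1 - δ * (μ U₀).toReal
  have hθ0 : 0 < θ := by linarith
  have hθ1 : θ < 1 := by linarith
  refine ⟨Real.log_pos (one_lt_one_div hθ0 hθ1), fun τ => ?_⟩
  have hk : IsMarkovDensity μ (p τ) := ⟨.of_continuous (hp_cont τ), hp_nonneg τ, hp_int τ⟩
  obtain ⟨π, hπ1, hπ, huniq, hconv⟩ :=
    hk.exists_unique_isInvariantMeasure (hk.contractsOsc hU₀ (hp_low τ)) hθ0.le hθ1
  refine ⟨π, hπ1, hπ, huniq, fun φ hφ hφb n _ x => ?_⟩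
  have hPτ : P τ = markovOp μ (p τ) := funext fun φ => funext (hP τ φ)
  have hK : 0 ≤ ⨆ z, |φ z| := Real.iSup_nonneg fun z => abs_nonneg _
  have h2θ : 2 ≤ 2 / θ := by rw [le_div_iff₀ hθ0]; linarith
  rw [hPτ, one_div, Real.log_inv, neg_neg, ← Real.rpow_def_of_pos hθ0, Real.rpow_natCast]
  calc _ ≤ θ ^ n * (2 * ⨆ z, |φ z|) := hconv φ _ ⟨hφ, hφb⟩ (oscLE_two_mul_iSup_abs hφb) n x
    _ ≤ 2 / θ * (⨆ z, |φ z|) * θ ^ n := by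
      rw [mul_comm]
      gcongr

/-- family version of the Doob-type ergodic theorem, uniform in the
parameter `τ`: for each `τ` there is a unique invariant probability measure `π_τ` of
`P_τ`, and `P_τⁿφ → ∫ φ dπ_τ` uniformly in `x` and in `τ`, with explicit constants
`ρ = log(1/(1−δμ(U₀)))` and `C = 2/(1−δμ(U₀))` independent of `τ` and `φ`. -/
theorem stmt_3
    {S : Type*} [MetricSpace S] [CompactSpace S] [Nonempty S]
    [MeasurableSpace S] [BorelSpace S]
    (μ : Measure S) [IsProbabilityMeasure μ]
    {T : Type*} [Nonempty T]
    (p : T → S × S → ℝ)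
    (hp_cont : ∀ τ, Continuous (p τ)) (hp_nonneg : ∀ τ z, 0 ≤ p τ z)
    (hp_int : ∀ τ, ∀ x : S, ∫ y, p τ (x, y) ∂μ = 1)
    (P : T → (S → ℝ) → (S → ℝ))
    (hP : ∀ τ, ∀ (φ : S → ℝ) (x : S), P τ φ x = ∫ y, p τ (x, y) * φ y ∂μ)
    (U₀ : Set S) (hU₀ : MeasurableSet U₀)
    (δ : ℝ) (hδ : 0 < δ)
    (hδμ_pos : 0 < δ * (μ U₀).toReal) (hδμ_lt : δ * (μ U₀).toReal < 1)
    (hp_low : ∀ τ, ∀ x : S, ∀ y ∈ U₀, δ ≤ p τ (x, y)) :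
    0 < Real.log (1 / (1 - δ * (μ U₀).toReal)) ∧
    ∀ τ : T, ∃ π : Measure S, IsProbabilityMeasure π ∧
      (∀ E : Set S, MeasurableSet E →
        (π E).toReal = ∫ x, (∫ y in E, p τ (x, y) ∂μ) ∂π) ∧
      (∀ π' : Measure S, IsProbabilityMeasure π' →
        (∀ E : Set S, MeasurableSet E →
          (π' E).toReal = ∫ x, (∫ y in E, p τ (x, y) ∂μ) ∂π') → π' = π) ∧
      (∀ φ : S → ℝ, Measurable φ → (∃ M : ℝ, ∀ x, |φ x| ≤ M) →
        ∀ n : ℕ, 1 ≤ n → ∀ x : S,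
          |((P τ)^[n] φ) x - ∫ y, φ y ∂π| ≤
            (2 / (1 - δ * (μ U₀).toReal)) * (⨆ z : S, |φ z|) *
              Real.exp (-(Real.log (1 / (1 - δ * (μ U₀).toReal))) * n)) :=
  stmt_3_general μ p hp_cont hp_nonneg hp_int P hP U₀ hU₀ δ hδμ_pos hδμ_lt hp_low
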